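/- Let K_1, ..., K_{d+1} be nonempty compact convex sets in R^d such that there exist oriented hyperplanes G_1, ..., G_{d+1} with Δ = ∩_{i=1}^{d+1} G_i^- a nonempty bounded open set, and each K_i contained in the closure of ∩_{j ≠ i} G_j^+. Then for every selection of points x_1 ∈ K_1, ..., x_{d+1} ∈ K_{d+1}, the set Δ is contained in conv{x_1, ..., x_{d+1}}; in particular the intersection over all such selections of conv{x_1,...,x_{d+1}} has nonempty interior. -/

import Mathlib

/-!
Boundedness of `Δ` forces the functionals `f j`, `j ≠ i`, to be independent, so the hyperplanes
cut out a simplex whose vertex `v i` lies on every `G j` with `j ≠ i`, and `Δ` is its interior.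
The hypothesis on `K i` places each `x i` in the cone `v i + cone {v i - v j}`. If a linear
functional separated a point of `conv {v}` from `conv {x}`, it would attain its minimum over the
vertices at some `v i`, and it is even smaller at `x i`: a contradiction.
-/

open Set Module

theorem eq_zero_of_isBounded_of_forall_add_smul_mem {E : Type*} [NormedAddCommGroup E]
    [NormedSpace ℝ E] {s : Set E} (hs : Bornology.IsBounded s) {y w : E}
    (hray : ∀ t : ℝ, 0 ≤ t → y + t • w ∈ s) : w = 0 := by
  obtain ⟨C, hC⟩ := isBounded_iff_forall_norm_le.mp hs
  have hbound : ∀ t : ℝ, 0 ≤ t → t * ‖w‖ ≤ C + ‖y‖ := fun t ht =>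
    calc t * ‖w‖ = ‖(y + t • w) - y‖ := by simp [norm_smul, abs_of_nonneg ht]
      _ ≤ ‖y + t • w‖ + ‖y‖ := norm_sub_le _ _
      _ ≤ C + ‖y‖ := by gcongr; exact hC _ (hray t ht)
  by_contra hw
  have hC0 : 0 ≤ C := (norm_nonneg y).trans (by simpa using hC _ (hray 0 le_rfl))
  have := hbound ((C + ‖y‖ + 1) / ‖w‖) (by positivity)
  rw [div_mul_cancel₀ _ (norm_ne_zero_iff.mpr hw)] at this
  linarith

/-- The paper's `Δ = ⋂ i, G_i⁻` for the hyperplanes `G_i = {f i = c i}`. -/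
def lowerCell {E ι : Type*} [AddCommGroup E] [Module ℝ E] (f : ι → E →ₗ[ℝ] ℝ) (c : ι → ℝ) :
    Set E :=
  ⋂ i, {y | f i y < c i}

section BoundedCell

variable {E ι : Type*} [NormedAddCommGroup E] [NormedSpace ℝ E] {f : ι → E →ₗ[ℝ] ℝ} {c : ι → ℝ}

theorem eq_zero_of_forall_apply_nonpos (hne : (lowerCell f c).Nonempty)
    (hbd : Bornology.IsBounded (lowerCell f c)) {w : E} (hw : ∀ i, f i w ≤ 0) : w = 0 := by
  obtain ⟨y, hy⟩ := hne
  refine eq_zero_of_isBounded_of_forall_add_smul_mem hbd (y := y) fun t ht => ?_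
  simp only [lowerCell, mem_iInter, mem_ofPred_eq, map_add, map_smul, smul_eq_mul] at hy ⊢
  exact fun i => by nlinarith [hy i, hw i]

theorem eq_zero_of_forall_ne_apply_eq_zero (hne : (lowerCell f c).Nonempty)
    (hbd : Bornology.IsBounded (lowerCell f c)) {i : ι} {w : E} (hw : ∀ j ≠ i, f j w = 0) :
    w = 0 := by
  rcases le_total (f i w) 0 with hi | hi
  · exact eq_zero_of_forall_apply_nonpos hne hbd fun j => by
      rcases eq_or_ne j i with rfl | hj <;> simp [*]
  · refine neg_eq_zero.mp <| eq_zero_of_forall_apply_nonpos hne hbd fun j => ?_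
    rcases eq_or_ne j i with rfl | hj <;> simp [*]

theorem apply_lt_of_forall_ne_apply_eq (hne : (lowerCell f c).Nonempty)
    (hbd : Bornology.IsBounded (lowerCell f c)) {i : ι} {v : E} (hv : ∀ j ≠ i, f j v = c j) :
    f i v < c i := by
  have ⟨y, hy⟩ := hne
  simp only [lowerCell, mem_iInter, mem_ofPred_eq] at hy
  by_contra! hle
  have hyv : y - v = 0 := eq_zero_of_forall_apply_nonpos hne hbd fun j => by
    rcases eq_or_ne j i with rfl | hj
    · linarith [map_sub (f j) y v, hy j]
    · linarith [map_sub (f j) y v, hy j, hv j hj]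
  exact (hy i).not_ge (sub_eq_zero.mp hyv ▸ hle)

end BoundedCell

theorem exists_forall_ne_apply_eq {E ι : Type*} [AddCommGroup E] [Module ℝ E]
    [FiniteDimensional ℝ E] [Fintype ι] (hcard : Fintype.card ι = finrank ℝ E + 1)
    {f : ι → E →ₗ[ℝ] ℝ} (c : ι → ℝ) {i : ι} (hker : ∀ w, (∀ j ≠ i, f j w = 0) → w = 0) :
    ∃ v : E, ∀ j ≠ i, f j v = c j := by
  classical
  let Φ : E →ₗ[ℝ] ({j // j ≠ i} → ℝ) := LinearMap.pi fun j => f j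
  have hΦ : Function.Injective Φ := by
    rw [← LinearMap.ker_eq_bot, LinearMap.ker_eq_bot']
    exact fun w hw => hker w fun j hj => congr_fun hw ⟨j, hj⟩
  have hdim : finrank ℝ E = finrank ℝ ({j // j ≠ i} → ℝ) := by
    simp [Fintype.card_subtype_compl, hcard]
  obtain ⟨v, hv⟩ := (LinearMap.injective_iff_surjective_of_finrank_eq_finrank hdim).mp hΦ
    fun j => c j
  exact ⟨v, fun j hj => congr_fun hv ⟨j, hj⟩⟩

section Barycentric

variable {E ι : Type*} [AddCommGroup E] [Module ℝ E] [Fintype ι]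
  {f : ι → E →ₗ[ℝ] ℝ} {c : ι → ℝ} {v : ι → E}

/-- The affine function vanishing on `G j` and equal to `1` at `v j`: the `j`-th barycentric
coordinate of the simplex with vertices `v`. -/
noncomputable def baryCoord (f : ι → E →ₗ[ℝ] ℝ) (c : ι → ℝ) (v : ι → E) (j : ι) (z : E) : ℝ :=
  (c j - f j z) / (c j - f j (v j))

theorem apply_sum_baryCoord_smul_sub (hv : ∀ i, ∀ j ≠ i, f j (v i) = c j)
    (hvlt : ∀ i, f i (v i) < c i) (z : E) (k : ι) :
    f k (∑ j, baryCoord f c v j z • v j - z) = (∑ j, baryCoord f c v j z - 1) * c k := by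
  classical
  have hterm : ∀ j, f k (baryCoord f c v j z • v j) =
      baryCoord f c v j z * c k + if j = k then f k z - c k else 0 := by
    intro j
    rw [map_smul, smul_eq_mul]
    split_ifs with hjk
    · subst hjk
      have : c j - f j (v j) ≠ 0 := (sub_pos.mpr (hvlt j)).ne'
      simp only [baryCoord]
      field_simp
      ring
    · rw [hv j k (Ne.symm hjk), add_zero]
  simp only [map_sub, map_sum, hterm, Finset.sum_add_distrib, ← Finset.sum_mul,
    Finset.sum_ite_eq' Finset.univ k, Finset.mem_univ, if_true]
  ring

theorem sum_baryCoord [Nonempty ι] (hv : ∀ i, ∀ j ≠ i, f j (v i) = c j)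
    (hvlt : ∀ i, f i (v i) < c i) (hker : ∀ i w, (∀ j ≠ i, f j w = 0) → w = 0) (z : E) :
    ∑ j, baryCoord f c v j z = 1 := by
  set σ := ∑ j, baryCoord f c v j z
  by_contra hσ
  -- otherwise a rescaling of the defect lies on all the hyperplanes, so it is every vertex
  set q := (σ - 1)⁻¹ • (∑ j, baryCoord f c v j z • v j - z)
  have hq : ∀ k, f k q = c k := fun k => by
    rw [map_smul, apply_sum_baryCoord_smul_sub hv hvlt, smul_eq_mul,
      inv_mul_cancel_left₀ (sub_ne_zero.mpr hσ)]
  obtain ⟨i⟩ := ‹Nonempty ι›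
  have hqv : q - v i = 0 := hker i _ fun j hj => by rw [map_sub, hq, hv i j hj, sub_self]
  exact (hvlt i).ne (sub_eq_zero.mp hqv ▸ hq i)

theorem sum_baryCoord_smul [Nonempty ι] (hv : ∀ i, ∀ j ≠ i, f j (v i) = c j)
    (hvlt : ∀ i, f i (v i) < c i) (hker : ∀ i w, (∀ j ≠ i, f j w = 0) → w = 0) (z : E) :
    ∑ j, baryCoord f c v j z • v j = z := by
  obtain ⟨i⟩ := ‹Nonempty ι›
  refine sub_eq_zero.mp (hker i _ fun k _ => ?_)
  rw [apply_sum_baryCoord_smul_sub hv hvlt, sum_baryCoord hv hvlt hker, sub_self, zero_mul]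

theorem lowerCell_subset_convexHull [Nonempty ι] (hv : ∀ i, ∀ j ≠ i, f j (v i) = c j)
    (hvlt : ∀ i, f i (v i) < c i) (hker : ∀ i w, (∀ j ≠ i, f j w = 0) → w = 0) :
    lowerCell f c ⊆ convexHull ℝ (range v) := by
  intro y hy
  simp only [lowerCell, mem_iInter, mem_ofPred_eq] at hy
  rw [← sum_baryCoord_smul hv hvlt hker y]
  refine (convex_convexHull ℝ _).sum_mem (fun j _ => ?_) (sum_baryCoord hv hvlt hker y)
    fun j _ => subset_convexHull ℝ _ (mem_range_self j)
  exact div_nonneg (sub_nonneg.mpr (hy j).le) (sub_pos.mpr (hvlt j)).le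

theorem exists_eq_add_sum_smul_sub [Nonempty ι] (hv : ∀ i, ∀ j ≠ i, f j (v i) = c j)
    (hvlt : ∀ i, f i (v i) < c i) (hker : ∀ i w, (∀ j ≠ i, f j w = 0) → w = 0) {i : ι} {z : E}
    (hz : ∀ j ≠ i, c j ≤ f j z) :
    ∃ t : ι → ℝ, (∀ j, 0 ≤ t j) ∧ z = v i + ∑ j, t j • (v i - v j) := by
  classical
  refine ⟨fun j => if j = i then 0 else -baryCoord f c v j z, fun j => ?_, ?_⟩
  · dsimp only
    split_ifs with hj
    · exact le_rfl
    · exact neg_nonneg.mpr <| div_nonpos_of_nonpos_of_nonneg (sub_nonpos.mpr (hz j hj))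
        (sub_pos.mpr (hvlt j)).le
  · have hsum : ∑ j, (if j = i then 0 else -baryCoord f c v j z) • (v i - v j) =
        ∑ j, (-baryCoord f c v j z) • (v i - v j) :=
      Finset.sum_congr rfl fun j _ => by split_ifs with hj <;> simp [hj]
    rw [hsum]
    simp only [smul_sub, Finset.sum_sub_distrib, ← Finset.sum_smul, sum_baryCoord hv hvlt hker,
      neg_smul, Finset.sum_neg_distrib, sum_baryCoord_smul hv hvlt hker]
    module

end Barycentric

theorem convexHull_range_subset_of_forall_eq_add_sum_smul_sub {E ι : Type*}
    [TopologicalSpace E] [AddCommGroup E] [Module ℝ E] [IsTopologicalAddGroup E]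
    [ContinuousSMul ℝ E] [LocallyConvexSpace ℝ E] [T2Space E] [Fintype ι] {v x : ι → E}
    (hx : ∀ i, ∃ t : ι → ℝ, (∀ j, 0 ≤ t j) ∧ x i = v i + ∑ j, t j • (v i - v j)) :
    convexHull ℝ (range v) ⊆ convexHull ℝ (range x) := by
  intro z hz
  by_contra hzx
  obtain ⟨g, u, hgz, hgx⟩ := geometric_hahn_banach_point_closed (convex_convexHull ℝ _)
    ((finite_range x).isClosed_convexHull ℝ) hzx
  have : Nonempty ι := range_nonempty_iff_nonempty.mp (convexHull_nonempty_iff.mp ⟨z, hz⟩)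
  obtain ⟨i, hi⟩ := Finite.exists_min fun j => g (v j)
  have hvz : g (v i) ≤ g z := by
    have hsub : range v ⊆ {w | g (v i) ≤ g w} := range_subset_iff.mpr hi
    exact convexHull_min hsub (convex_halfSpace_ge g.isLinear _) hz
  have hxv : g (x i) ≤ g (v i) := by
    obtain ⟨t, ht, hxi⟩ := hx i
    rw [hxi, map_add, map_sum, add_le_iff_nonpos_right]
    exact Finset.sum_nonpos fun j _ => by
      rw [map_smul, map_sub, smul_eq_mul]
      exact mul_nonpos_of_nonneg_of_nonpos (ht j) (sub_nonpos.mpr (hi j))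
  linarith [hgx _ (subset_convexHull ℝ _ (mem_range_self i))]

theorem forall_ne_le_apply_of_mem_closure {E ι : Type*} [TopologicalSpace E] {f : ι → E → ℝ}
    (hf : ∀ j, Continuous (f j)) {c : ι → ℝ} {i : ι} {z : E}
    (hz : z ∈ closure (⋂ j, ⋂ (_ : j ≠ i), {y | c j < f j y})) : ∀ j ≠ i, c j ≤ f j z := by
  have hclosed : IsClosed (⋂ j, ⋂ (_ : j ≠ i), {y | c j ≤ f j y}) :=
    isClosed_iInter fun j => isClosed_iInter fun _ => isClosed_le continuous_const (hf j)
  have := closure_minimal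
    (iInter₂_mono fun _ _ => ofPred_subset_ofPred.mpr fun _ => le_of_lt) hclosed hz
  simpa only [mem_iInter, mem_ofPred_eq] using this

theorem stmt4_general (d : ℕ) (K : Fin (d + 1) → Set (Fin d → ℝ))
    (f : Fin (d + 1) → (Fin d → ℝ) →ₗ[ℝ] ℝ) (c : Fin (d + 1) → ℝ)
    (hne : (⋂ i, {y : Fin d → ℝ | f i y < c i}).Nonempty)
    (hbd : Bornology.IsBounded (⋂ i, {y : Fin d → ℝ | f i y < c i}))
    (hK : ∀ i, K i ⊆ closure (⋂ j, ⋂ (_ : j ≠ i), {y : Fin d → ℝ | c j < f j y})) :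
    (∀ x : Fin (d + 1) → Fin d → ℝ, (∀ i, x i ∈ K i) →
      (⋂ i, {y : Fin d → ℝ | f i y < c i}) ⊆ convexHull ℝ (Set.range x)) ∧
    (interior (⋂ (x : Fin (d + 1) → Fin d → ℝ) (_ : ∀ i, x i ∈ K i),
      convexHull ℝ (Set.range x))).Nonempty := by
  change (lowerCell f c).Nonempty at hne
  change Bornology.IsBounded (lowerCell f c) at hbd
  have hker : ∀ i w, (∀ j ≠ i, f j w = 0) → w = 0 := fun _ _ hw =>
    eq_zero_of_forall_ne_apply_eq_zero hne hbd hw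
  choose v hv using fun i => exists_forall_ne_apply_eq (by simp) c (hker i)
  have hvlt : ∀ i, f i (v i) < c i := fun i => apply_lt_of_forall_ne_apply_eq hne hbd (hv i)
  have hsimplex : ∀ x : Fin (d + 1) → Fin d → ℝ, (∀ i, x i ∈ K i) →
      lowerCell f c ⊆ convexHull ℝ (range x) := fun x hx =>
    (lowerCell_subset_convexHull hv hvlt hker).trans <|
      convexHull_range_subset_of_forall_eq_add_sum_smul_sub fun i =>
        exists_eq_add_sum_smul_sub hv hvlt hker <|
          forall_ne_le_apply_of_mem_closure (fun j => (f j).continuous_of_finiteDimensional)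
            (hK i (hx i))
  have hopen : IsOpen (lowerCell f c) :=
    isOpen_iInter_of_finite fun i => isOpen_lt (f i).continuous_of_finiteDimensional
      continuous_const
  exact ⟨hsimplex, hne.mono (interior_maximal (subset_iInter₂ hsimplex) hopen)⟩

/-- If nonempty compact convex sets `K_1, ..., K_{d+1}` are split by
oriented hyperplanes `G_1, ..., G_{d+1}` (with `Δ = ⋂ i, G_i⁻` a nonempty bounded
open set and `K_i ⊆ closure (⋂_{j ≠ i} G_j⁺)`), then every colorful simplex
`conv{x_1, ..., x_{d+1}}` with `x_i ∈ K_i` contains `Δ`; in particular the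
intersection of all these colorful simplices has nonempty interior. -/
theorem stmt4 (d : ℕ) (K : Fin (d + 1) → Set (Fin d → ℝ))
    (hKne : ∀ i, (K i).Nonempty) (hKcp : ∀ i, IsCompact (K i))
    (hKcv : ∀ i, Convex ℝ (K i))
    (f : Fin (d + 1) → (Fin d → ℝ) →ₗ[ℝ] ℝ) (c : Fin (d + 1) → ℝ)
    (hf : ∀ i, f i ≠ 0)
    (hne : (⋂ i, {y : Fin d → ℝ | f i y < c i}).Nonempty)
    (hbd : Bornology.IsBounded (⋂ i, {y : Fin d → ℝ | f i y < c i}))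
    (hK : ∀ i, K i ⊆ closure (⋂ j, ⋂ (_ : j ≠ i), {y : Fin d → ℝ | c j < f j y})) :
    (∀ x : Fin (d + 1) → Fin d → ℝ, (∀ i, x i ∈ K i) →
      (⋂ i, {y : Fin d → ℝ | f i y < c i}) ⊆ convexHull ℝ (Set.range x)) ∧
    (interior (⋂ (x : Fin (d + 1) → Fin d → ℝ) (_ : ∀ i, x i ∈ K i),
      convexHull ℝ (Set.range x))).Nonempty :=
  stmt4_general d K f c hne hbd hK
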